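/- arXiv:1711.09455 — 2 statements merged into one kernel-verified Lean document; each statement's English description precedes it below -/
import Mathlib

section
/- Let H be a real Hilbert space, T : H → H a nonexpansive mapping with Fix(T) ≠ ∅, and (γ_n) a sequence of positive reals with ∑_{n=0}^∞ γ_n² = ∞. For each n let R_n : H → H satisfy R_n x = (1/(1+γ_n))·x + (γ_n/(1+γ_n))·T(R_n x) for all x ∈ H. Let x ∈ H and define x₀ := x, x_{n+1} := R_n x_n. Then (x_n) converges weakly to a fixed point of T. -/
/-!
With `A = I - T`, which is monotone because `T` is nonexpansive, a resolvent step reads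
`xₙ = xₙ₊₁ + γₙ A xₙ₊₁`. Hence `‖xₙ₊₁ - q‖² + γₙ² ‖A xₙ₊₁‖² ≤ ‖xₙ - q‖²` for every fixed point `q`
(Fejér monotonicity) and `‖A xₙ‖` is nonincreasing, so `∑ γₙ² = ∞` forces `A xₙ → 0`.
By demiclosedness of `I - T` every weak cluster point of `(xₙ)` is a fixed point, and Opial's
argument (distances to fixed points converge, so two weak cluster points must coincide) yields
weak convergence of the whole sequence.
-/

open Filter Topology Metric Set Function
open scoped RealInnerProductSpace

theorem tendsto_zero_of_antitone_of_sum_mul_le {a w : ℕ → ℝ} {C : ℝ} (ha : Antitone a)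
    (ha₀ : ∀ n, 0 ≤ a n) (hw₀ : ∀ n, 0 ≤ w n)
    (hw : Tendsto (fun N => ∑ n ∈ Finset.range N, w n) atTop atTop)
    (hsum : ∀ N, ∑ n ∈ Finset.range N, w n * a n ≤ C) : Tendsto a atTop (𝓝 0) := by
  have hbdd : BddBelow (range a) := ⟨0, by rintro _ ⟨n, rfl⟩; exact ha₀ n⟩
  have hlim := tendsto_atTop_ciInf ha hbdd
  suffices hinf : ⨅ n, a n = 0 by rwa [hinf] at hlim
  by_contra hne
  have hpos : 0 < ⨅ n, a n := (le_ciInf ha₀).lt_of_ne' hne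
  have hdiv : Tendsto (fun N => ∑ n ∈ Finset.range N, w n * a n) atTop atTop := by
    refine tendsto_atTop_mono (fun N => ?_) (hw.atTop_mul_const hpos)
    rw [Finset.sum_mul]
    exact Finset.sum_le_sum fun n _ => mul_le_mul_of_nonneg_left (ciInf_le hbdd n) (hw₀ n)
  obtain ⟨N, hN⟩ := (hdiv.eventually_gt_atTop C).exists
  exact (hsum N).not_gt hN

section WeakTopology

variable {H : Type*} [NormedAddCommGroup H] [InnerProductSpace ℝ H]

theorem Filter.Tendsto.inner_of_toWeakSpace {ι : Type*} {l : Filter ι} {u : ι → H} {p : H}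
    (h : Tendsto (fun i => toWeakSpace ℝ H (u i)) l (𝓝 (toWeakSpace ℝ H p))) (y : H) :
    Tendsto (fun i => ⟪y, u i⟫) l (𝓝 ⟪y, p⟫) :=
  ((WeakBilin.eval_continuous _ (innerSL ℝ y)).tendsto _).comp h

-- Banach–Alaoglu in the dual, transported to `H` by the Riesz isomorphism.
theorem isCompact_toWeakSpace_closedBall [CompleteSpace H] (r : ℝ) :
    IsCompact (toWeakSpace ℝ H '' closedBall 0 r) := by
  set e := InnerProductSpace.toDual ℝ H
  let g : WeakDual ℝ H → WeakSpace ℝ H := fun φ => toWeakSpace ℝ H (e.symm φ.toStrongDual)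
  have hg : Continuous g := by
    refine WeakBilin.continuous_of_continuous_eval _ fun f => ?_
    convert WeakDual.eval_continuous (e.symm f) using 2 with φ
    change f (e.symm φ.toStrongDual) = φ.toStrongDual (e.symm f)
    rw [← InnerProductSpace.toDual_symm_apply, real_inner_comm,
      InnerProductSpace.toDual_symm_apply]
  have himage : g '' (WeakDual.toStrongDual ⁻¹' closedBall 0 r) =
      toWeakSpace ℝ H '' closedBall 0 r := by
    rw [show g = (fun ψ => toWeakSpace ℝ H (e.symm ψ)) ∘ WeakDual.toStrongDual from rfl,
      image_comp, WeakDual.toStrongDual.surjective.image_preimage, ← Set.image_image,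
      e.symm.image_closedBall, map_zero]
  rw [← himage]
  exact (WeakDual.isCompact_closedBall 0 r).image hg


theorem eq_of_tendsto_toWeakSpace_of_tendsto_norm_sub {ι : Type*} {l l₁ l₂ : Filter ι}
    [l₁.NeBot] [l₂.NeBot] (h₁ : l₁ ≤ l) (h₂ : l₂ ≤ l) {u : ι → H} {p₁ p₂ : H} {d₁ d₂ : ℝ}
    (hd₁ : Tendsto (fun i => ‖u i - p₁‖) l (𝓝 d₁))
    (hd₂ : Tendsto (fun i => ‖u i - p₂‖) l (𝓝 d₂))
    (hp₁ : Tendsto (fun i => toWeakSpace ℝ H (u i)) l₁ (𝓝 (toWeakSpace ℝ H p₁)))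
    (hp₂ : Tendsto (fun i => toWeakSpace ℝ H (u i)) l₂ (𝓝 (toWeakSpace ℝ H p₂))) :
    p₁ = p₂ := by
  have hpolar : ∀ i, ⟪p₁ - p₂, u i⟫ =
      (‖u i - p₂‖ ^ 2 - ‖u i - p₁‖ ^ 2 + ‖p₁‖ ^ 2 - ‖p₂‖ ^ 2) / 2 := fun i => by
    rw [norm_sub_sq_real, norm_sub_sq_real, inner_sub_left, real_inner_comm p₁,
      real_inner_comm p₂]
    ring
  have hconv : Tendsto (fun i => ⟪p₁ - p₂, u i⟫) l
      (𝓝 ((d₂ ^ 2 - d₁ ^ 2 + ‖p₁‖ ^ 2 - ‖p₂‖ ^ 2) / 2)) := by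
    simp only [hpolar]
    exact ((((hd₂.pow 2).sub (hd₁.pow 2)).add_const _).sub_const _).div_const 2
  have e₁ := tendsto_nhds_unique (hp₁.inner_of_toWeakSpace (p₁ - p₂)) (hconv.mono_left h₁)
  have e₂ := tendsto_nhds_unique (hp₂.inner_of_toWeakSpace (p₁ - p₂)) (hconv.mono_left h₂)
  have hzero : ⟪p₁ - p₂, p₁ - p₂⟫ = 0 := by rw [inner_sub_right, e₁, e₂, sub_self]
  exact sub_eq_zero.1 (inner_self_eq_zero.1 hzero)

theorem exists_tendsto_toWeakSpace_of_tendsto_norm_sub [CompleteSpace H] {ι : Type*}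
    {l : Filter ι} [l.NeBot] {u : ι → H} {F : Set H} (hu : Bornology.IsBounded (range u))
    (hF : ∀ q ∈ F, ∃ d, Tendsto (fun i => ‖u i - q‖) l (𝓝 d))
    (hclus : ∀ (U : Ultrafilter ι) (p : H), ↑U ≤ l →
      Tendsto (fun i => toWeakSpace ℝ H (u i)) U (𝓝 (toWeakSpace ℝ H p)) → p ∈ F) :
    ∃ p ∈ F, Tendsto (fun i => toWeakSpace ℝ H (u i)) l (𝓝 (toWeakSpace ℝ H p)) := by
  obtain ⟨r, hr⟩ := (isBounded_iff_subset_closedBall 0).1 hu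
  have hK := isCompact_toWeakSpace_closedBall (H := H) r
  have hmem : ∀ i, toWeakSpace ℝ H (u i) ∈ toWeakSpace ℝ H '' closedBall 0 r :=
    fun i => mem_image_of_mem _ (hr (mem_range_self i))
  obtain ⟨_, ⟨p, -, rfl⟩, hp⟩ := hK.exists_mapClusterPt (f := l)
    (tendsto_principal.2 (.of_forall hmem))
  obtain ⟨U, hUl, hU⟩ := mapClusterPt_iff_ultrafilter.1 hp
  have hpF := hclus U p hUl hU
  refine ⟨p, hpF, hK.tendsto_nhds_of_unique_mapClusterPt (.of_forall hmem) ?_⟩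
  rintro _ ⟨p', -, rfl⟩ hp'
  obtain ⟨U', hU'l, hU'⟩ := mapClusterPt_iff_ultrafilter.1 hp'
  obtain ⟨d, hd⟩ := hF p hpF
  obtain ⟨d', hd'⟩ := hF p' (hclus U' p' hU'l hU')
  rw [eq_of_tendsto_toWeakSpace_of_tendsto_norm_sub hU'l hUl hd' hd hU' hU]

end WeakTopology

section Nonexpansive

variable {H : Type*} [NormedAddCommGroup H] [InnerProductSpace ℝ H] {T : H → H}

theorem isFixedPt_of_tendsto_toWeakSpace_of_tendsto_sub (hT : ∀ x y, ‖T x - T y‖ ≤ ‖x - y‖)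
    {ι : Type*} {l : Filter ι} [l.NeBot] {u : ι → H} {p : H}
    (hweak : Tendsto (fun i => toWeakSpace ℝ H (u i)) l (𝓝 (toWeakSpace ℝ H p)))
    (hres : Tendsto (fun i => u i - T (u i)) l (𝓝 0))
    (hbdd : IsBoundedUnder (· ≤ ·) l fun i => ‖u i - p‖) : IsFixedPt T p := by
  set a := fun i => ‖u i - T (u i)‖
  have hle : ∀ i, ‖p - T p‖ ^ 2 ≤
      a i ^ 2 + 2 * (a i * ‖u i - p‖) - 2 * (⟪p - T p, u i⟫ - ⟪p - T p, p⟫) := fun i => by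
    have hexpand : ‖u i - T p‖ ^ 2 =
        ‖u i - p‖ ^ 2 + 2 * (⟪p - T p, u i⟫ - ⟪p - T p, p⟫) + ‖p - T p‖ ^ 2 := by
      rw [← inner_sub_right, real_inner_comm, ← norm_add_sq_real, sub_add_sub_cancel]
    have htriangle : ‖u i - T p‖ ≤ a i + ‖u i - p‖ :=
      (norm_sub_le_norm_sub_add_norm_sub _ (T (u i)) _).trans (add_le_add_right (hT _ _) _)
    nlinarith [norm_nonneg (u i - T p)]
  have ha : Tendsto a l (𝓝 0) := by simpa using hres.norm
  have hlim : Tendsto (fun i =>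
      a i ^ 2 + 2 * (a i * ‖u i - p‖) - 2 * (⟪p - T p, u i⟫ - ⟪p - T p, p⟫)) l (𝓝 0) := by
    have hinner := (hweak.inner_of_toWeakSpace (p - T p)).sub_const ⟪p - T p, p⟫
    have hprod := ha.zero_mul_isBoundedUnder_le (g := fun i => ‖u i - p‖) (by simpa [Function.comp_def] using hbdd)
    simpa using ((ha.pow 2).add (hprod.const_mul 2)).sub (hinner.const_mul 2)
  have hsq : ‖p - T p‖ ^ 2 ≤ 0 := ge_of_tendsto' hlim hle
  have : p - T p = 0 := by simpa using hsq.antisymm (sq_nonneg _)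
  exact (sub_eq_zero.1 this).symm

end Nonexpansive

section Resolvent

variable {H : Type*} [NormedAddCommGroup H] [InnerProductSpace ℝ H] {T : H → H}

theorem inner_sub_sub_sub_apply_nonneg (hT : ∀ x y, ‖T x - T y‖ ≤ ‖x - y‖) (u v : H) :
    0 ≤ ⟪u - v, (u - T u) - (v - T v)⟫ := by
  have hcs := real_inner_le_norm (u - v) (T u - T v)
  rw [sub_sub_sub_comm, inner_sub_right, real_inner_self_eq_norm_sq]
  nlinarith [hT u v, norm_nonneg (u - v)]

theorem eq_add_smul_sub_apply_of_eq_resolvent {γ : ℝ} (hγ : 1 + γ ≠ 0) {x y : H}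
    (h : y = (1 / (1 + γ)) • x + (γ / (1 + γ)) • T y) : x = y + γ • (y - T y) := by
  have hscaled := congrArg ((1 + γ) • ·) h
  simp only [smul_add, smul_smul, mul_one_div_cancel hγ, mul_div_cancel₀ _ hγ, one_smul] at hscaled
  linear_combination (norm := module) -hscaled

theorem norm_sub_sq_add_sq_mul_le (hT : ∀ x y, ‖T x - T y‖ ≤ ‖x - y‖) {γ : ℝ} (hγ : 0 ≤ γ)
    {x y q : H} (hxy : x = y + γ • (y - T y)) (hq : IsFixedPt T q) :
    ‖y - q‖ ^ 2 + γ ^ 2 * ‖y - T y‖ ^ 2 ≤ ‖x - q‖ ^ 2 := by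
  have hmono := inner_sub_sub_sub_apply_nonneg hT y q
  rw [hq.eq, sub_self, sub_zero] at hmono
  rw [hxy, add_sub_right_comm, norm_add_sq_real, real_inner_smul_right, norm_smul,
    Real.norm_of_nonneg hγ, mul_pow]
  nlinarith [mul_nonneg hγ hmono]

theorem norm_sub_apply_le_of_eq_add_smul (hT : ∀ x y, ‖T x - T y‖ ≤ ‖x - y‖) {γ : ℝ}
    (hγ : 0 ≤ γ) {x y : H} (hxy : x = y + γ • (y - T y)) : ‖y - T y‖ ≤ ‖x - T x‖ := by
  rcases hγ.eq_or_lt with rfl | hγ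
  · simp [hxy]
  have hmono := inner_sub_sub_sub_apply_nonneg hT x y
  rw [show x - y = γ • (y - T y) by rw [hxy]; abel, real_inner_smul_left, inner_sub_right,
    real_inner_self_eq_norm_sq] at hmono
  have hcs := real_inner_le_norm (y - T y) (x - T x)
  have hsq : ‖y - T y‖ ^ 2 ≤ ‖y - T y‖ * ‖x - T x‖ := by nlinarith
  nlinarith [norm_nonneg (y - T y), norm_nonneg (x - T x)]

end Resolvent

section ProximalPoint

variable {H : Type*} [NormedAddCommGroup H] [InnerProductSpace ℝ H] {T : H → H}
  {γ : ℕ → ℝ} {x : ℕ → H}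

theorem antitone_norm_sub_of_isFixedPt (hT : ∀ x y, ‖T x - T y‖ ≤ ‖x - y‖) (hγ : ∀ n, 0 ≤ γ n)
    (hstep : ∀ n, x n = x (n + 1) + γ n • (x (n + 1) - T (x (n + 1)))) {q : H}
    (hq : IsFixedPt T q) : Antitone fun n => ‖x n - q‖ :=
  antitone_nat_of_succ_le fun n => by
    have hfejer := norm_sub_sq_add_sq_mul_le hT (hγ n) (hstep n) hq
    refine (pow_le_pow_iff_left₀ (norm_nonneg _) (norm_nonneg _) two_ne_zero).1 ?_
    nlinarith [sq_nonneg (γ n), sq_nonneg ‖x (n + 1) - T (x (n + 1))‖]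

theorem sum_sq_mul_norm_sub_apply_le (hT : ∀ x y, ‖T x - T y‖ ≤ ‖x - y‖) (hγ : ∀ n, 0 ≤ γ n)
    (hstep : ∀ n, x n = x (n + 1) + γ n • (x (n + 1) - T (x (n + 1)))) {q : H}
    (hq : IsFixedPt T q) (N : ℕ) :
    ∑ n ∈ Finset.range N, γ n ^ 2 * ‖x (n + 1) - T (x (n + 1))‖ ^ 2 ≤ ‖x 0 - q‖ ^ 2 :=
  calc _ ≤ ∑ n ∈ Finset.range N, (‖x n - q‖ ^ 2 - ‖x (n + 1) - q‖ ^ 2) :=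
        Finset.sum_le_sum fun n _ => by
          linarith [norm_sub_sq_add_sq_mul_le hT (hγ n) (hstep n) hq]
    _ = ‖x 0 - q‖ ^ 2 - ‖x N - q‖ ^ 2 := Finset.sum_range_sub' _ N
    _ ≤ ‖x 0 - q‖ ^ 2 := sub_le_self _ (sq_nonneg _)

theorem tendsto_sub_apply_zero (hT : ∀ x y, ‖T x - T y‖ ≤ ‖x - y‖) (hγ : ∀ n, 0 ≤ γ n)
    (hdiv : Tendsto (fun N => ∑ n ∈ Finset.range N, γ n ^ 2) atTop atTop)
    (hstep : ∀ n, x n = x (n + 1) + γ n • (x (n + 1) - T (x (n + 1)))) {q : H}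
    (hq : IsFixedPt T q) : Tendsto (fun n => x n - T (x n)) atTop (𝓝 0) := by
  have hanti : Antitone fun n => ‖x n - T (x n)‖ :=
    antitone_nat_of_succ_le fun n => norm_sub_apply_le_of_eq_add_smul hT (hγ n) (hstep n)
  have hsq : Tendsto (fun n => ‖x (n + 1) - T (x (n + 1))‖ ^ 2) atTop (𝓝 0) :=
    tendsto_zero_of_antitone_of_sum_mul_le
      (fun m n hmn => pow_le_pow_left₀ (norm_nonneg _) (hanti (Nat.succ_le_succ hmn)) 2)
      (fun n => sq_nonneg _) (fun n => sq_nonneg _) hdiv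
      (sum_sq_mul_norm_sub_apply_le hT hγ hstep hq)
  rw [tendsto_zero_iff_norm_tendsto_zero, ← tendsto_add_atTop_iff_nat 1]
  simpa using hsq.sqrt

end ProximalPoint

theorem stmt4_general
    {H : Type*} [NormedAddCommGroup H] [InnerProductSpace ℝ H] [CompleteSpace H]
    (T : H → H) (hT : ∀ x y : H, ‖T x - T y‖ ≤ ‖x - y‖)
    (hFix : ∃ q : H, T q = q)
    (γ : ℕ → ℝ) (hγ : ∀ n, 0 < γ n)
    (hdiv : Tendsto (fun N => ∑ n ∈ Finset.range N, γ n ^ 2) atTop atTop)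
    (R : ℕ → H → H)
    (hR : ∀ n, ∀ x : H,
      R n x = (1 / (1 + γ n)) • x + (γ n / (1 + γ n)) • T (R n x))
    (x : ℕ → H) (hx : ∀ n, x (n + 1) = R n (x n)) :
    ∃ p : H, T p = p ∧
      Tendsto (fun n => toWeakSpace ℝ H (x n)) atTop (nhds (toWeakSpace ℝ H p)) := by
  obtain ⟨q, hq⟩ := hFix
  have hγ₀ : ∀ n, 0 ≤ γ n := fun n => (hγ n).le
  have hstep : ∀ n, x n = x (n + 1) + γ n • (x (n + 1) - T (x (n + 1))) := fun n =>
    eq_add_smul_sub_apply_of_eq_resolvent (by linarith [hγ n]) (by rw [hx n]; exact hR n (x n))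
  have hfejer := fun r (hr : IsFixedPt T r) => antitone_norm_sub_of_isFixedPt hT hγ₀ hstep hr
  have hdist : ∀ n, ‖x n - q‖ ≤ ‖x 0 - q‖ := fun n => hfejer q hq (Nat.zero_le n)
  have hbdd : Bornology.IsBounded (range x) := (isBounded_iff_subset_closedBall q).2
    ⟨_, by rintro _ ⟨n, rfl⟩; simpa [dist_eq_norm] using hdist n⟩
  have hres := tendsto_sub_apply_zero hT hγ₀ hdiv hstep hq
  obtain ⟨p, hp, hlim⟩ := exists_tendsto_toWeakSpace_of_tendsto_norm_sub (F := fixedPoints T)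
    hbdd (fun r hr => ⟨_, tendsto_atTop_ciInf (hfejer r hr) ⟨0, by rintro _ ⟨n, rfl⟩; positivity⟩⟩)
    fun U p hU hUp => isFixedPt_of_tendsto_toWeakSpace_of_tendsto_sub hT hUp (hres.mono_left hU)
      (isBoundedUnder_of ⟨‖x 0 - q‖ + ‖q - p‖, fun n =>
        (norm_sub_le_norm_sub_add_norm_sub _ q _).trans (add_le_add_left (hdist n) _)⟩)
  exact ⟨p, hp, hlim⟩

theorem stmt4
    {H : Type*} [NormedAddCommGroup H] [InnerProductSpace ℝ H] [CompleteSpace H]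
    (T : H → H) (hT : ∀ x y : H, ‖T x - T y‖ ≤ ‖x - y‖)
    (hFix : ∃ q : H, T q = q)
    (γ : ℕ → ℝ) (hγ : ∀ n, 0 < γ n)
    (hdiv : Tendsto (fun N => ∑ n ∈ Finset.range N, γ n ^ 2) atTop atTop)
    (R : ℕ → H → H)
    (hR : ∀ n, ∀ x : H,
      R n x = (1 / (1 + γ n)) • x + (γ n / (1 + γ n)) • T (R n x))
    (x₀ : H) (x : ℕ → H) (hx0 : x 0 = x₀) (hx : ∀ n, x (n + 1) = R n (x n)) :
    ∃ p : H, T p = p ∧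
      Tendsto (fun n => toWeakSpace ℝ H (x n)) atTop (nhds (toWeakSpace ℝ H p)) :=
  stmt4_general T hT hFix γ hγ hdiv R hR x hx
end

section
/- Let (X,d) be a metric space, (T_n) a family of self-maps of X each satisfying property (P₂) and having a common fixed point, and (γ_n) a sequence of positive reals with ∑_{n=0}^∞ γ_n² = ∞. Let x ∈ X, let (x_n) be the proximal-point iteration starting at x, and assume condition (C2) holds for (x_n). Then lim_{n→∞} d(x_n, x_{n+1}) = 0 and lim_{n→∞} d(x_n, x_{n+1})/γ_n = 0. -/
/-!
Fix a common fixed point `q`. Taking `y = q` in (P₂) gives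
`d(xₙ, xₙ₊₁)² + d(xₙ₊₁, q)² ≤ d(xₙ, q)²`, so the squared steps telescope to a sum bounded by
`d(x₀, q)²`; in particular `d(xₙ, xₙ₊₁) → 0`. By (C2) the ratios `d(xₙ, xₙ₊₁)/γₙ` decrease to
some `L ≥ 0`, and `L > 0` would give `γₙ² ≤ d(xₙ, xₙ₊₁)²/L²`, making `∑ γₙ²` finite.
-/

open Filter

/-- Property (P₂) for a self-map of a metric space. -/
def PropP2 {X : Type*} [MetricSpace X] (T : X → X) : Prop :=
  ∀ x y : X, 2 * dist (T x) (T y) ^ 2 ≤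
    dist x (T y) ^ 2 + dist y (T x) ^ 2 - dist x (T x) ^ 2 - dist y (T y) ^ 2

open Topology Finset

theorem PropP2.dist_sq_add_dist_sq_le {X : Type*} [MetricSpace X] {T : X → X} (hT : PropP2 T)
    {q : X} (hq : T q = q) (x : X) :
    dist x (T x) ^ 2 + dist (T x) q ^ 2 ≤ dist x q ^ 2 := by
  have h := hT x q
  rw [hq, dist_self, dist_comm q] at h
  linarith

theorem summable_of_le_sub_succ {a b : ℕ → ℝ} (ha : ∀ n, 0 ≤ a n) (hb : ∀ n, 0 ≤ b n)
    (h : ∀ n, a n ≤ b n - b (n + 1)) : Summable a := by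
  refine summable_of_sum_range_le (c := b 0) ha fun N => ?_
  calc ∑ n ∈ range N, a n ≤ ∑ n ∈ range N, (b n - b (n + 1)) := sum_le_sum fun n _ => h n
    _ = b 0 - b N := sum_range_sub' b N
    _ ≤ b 0 := by linarith [hb N]

theorem summable_dist_succ_sq_of_propP2 {X : Type*} [MetricSpace X] {T : ℕ → X → X}
    (hT : ∀ n, PropP2 (T n)) {q : X} (hq : ∀ n, T n q = q) {x : ℕ → X}
    (hx : ∀ n, x (n + 1) = T n (x n)) :
    Summable fun n => dist (x n) (x (n + 1)) ^ 2 := by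
  refine summable_of_le_sub_succ (fun _ => sq_nonneg _) (b := fun n => dist (x n) q ^ 2)
    (fun _ => sq_nonneg _) fun n => ?_
  have := (hT n).dist_sq_add_dist_sq_le (hq n) (x n)
  rw [← hx n] at this
  linarith

theorem tendsto_zero_of_summable_sq {a : ℕ → ℝ} (ha : ∀ n, 0 ≤ a n)
    (hsum : Summable fun n => a n ^ 2) : Tendsto a atTop (𝓝 0) := by
  simpa [Real.sqrt_sq (ha _)] using hsum.tendsto_atTop_zero.sqrt

theorem tendsto_div_zero_of_summable_sq {a γ : ℕ → ℝ} (ha : ∀ n, 0 ≤ a n) (hγ : ∀ n, 0 < γ n)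
    (hanti : Antitone fun n => a n / γ n) (hsum : Summable fun n => a n ^ 2)
    (hγsum : ¬Summable fun n => γ n ^ 2) :
    Tendsto (fun n => a n / γ n) atTop (𝓝 0) := by
  have hnonneg : ∀ n, 0 ≤ a n / γ n := fun n => div_nonneg (ha n) (hγ n).le
  have hbdd : BddBelow (Set.range fun n => a n / γ n) := ⟨0, by rintro _ ⟨n, rfl⟩; exact hnonneg n⟩
  set L := ⨅ n, a n / γ n
  have hlim : Tendsto (fun n => a n / γ n) atTop (𝓝 L) := tendsto_atTop_ciInf hanti hbdd
  suffices hL : L = 0 by rwa [hL] at hlim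
  refine le_antisymm (not_lt.mp fun hLpos => hγsum ?_) (le_ciInf hnonneg)
  refine (hsum.div_const (L ^ 2)).of_nonneg_of_le (fun n => sq_nonneg _) fun n => ?_
  have hγle : L * γ n ≤ a n := (le_div_iff₀ (hγ n)).mp (ciInf_le hbdd n)
  rw [le_div_iff₀ (by positivity)]
  nlinarith [mul_pos hLpos (hγ n)]

theorem stmt8_general
    {X : Type*} [MetricSpace X]
    (T : ℕ → X → X) (hP2 : ∀ n, PropP2 (T n))
    (hF : ∃ q : X, ∀ n, T n q = q)
    (γ : ℕ → ℝ) (hγ : ∀ n, 0 < γ n)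
    (hdiv : Tendsto (fun N => ∑ n ∈ Finset.range N, γ n ^ 2) atTop atTop)
    (x : ℕ → X) (hx : ∀ n, x (n + 1) = T n (x n))
    (hC2 : ∀ n : ℕ,
      dist (x (n + 1)) (x (n + 2)) / γ (n + 1) ≤ dist (x n) (x (n + 1)) / γ n) :
    Tendsto (fun n => dist (x n) (x (n + 1))) atTop (nhds 0) ∧
    Tendsto (fun n => dist (x n) (x (n + 1)) / γ n) atTop (nhds 0) := by
  obtain ⟨q, hq⟩ := hF
  have hsum := summable_dist_succ_sq_of_propP2 hP2 hq hx
  have hγsum : ¬Summable fun n => γ n ^ 2 :=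
    (not_summable_iff_tendsto_nat_atTop_of_nonneg fun n => sq_nonneg (γ n)).mpr hdiv
  exact ⟨tendsto_zero_of_summable_sq (fun _ => dist_nonneg) hsum,
    tendsto_div_zero_of_summable_sq (fun _ => dist_nonneg) hγ (antitone_nat_of_succ_le hC2)
      hsum hγsum⟩

theorem stmt8
    {X : Type*} [MetricSpace X]
    (T : ℕ → X → X) (hP2 : ∀ n, PropP2 (T n))
    (hF : ∃ q : X, ∀ n, T n q = q)
    (γ : ℕ → ℝ) (hγ : ∀ n, 0 < γ n)
    (hdiv : Tendsto (fun N => ∑ n ∈ Finset.range N, γ n ^ 2) atTop atTop)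
    (x₀ : X) (x : ℕ → X) (hx0 : x 0 = x₀) (hx : ∀ n, x (n + 1) = T n (x n))
    (hC2 : ∀ n : ℕ,
      dist (x (n + 1)) (x (n + 2)) / γ (n + 1) ≤ dist (x n) (x (n + 1)) / γ n) :
    Tendsto (fun n => dist (x n) (x (n + 1))) atTop (nhds 0) ∧
    Tendsto (fun n => dist (x n) (x (n + 1)) / γ n) atTop (nhds 0) :=
  stmt8_general T hP2 hF γ hγ hdiv x hx hC2
end
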